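/- arXiv:1506.00115 — 3 statements merged into one kernel-verified Lean document; each statement's English description precedes it below -/
import Mathlib

section
/- For any Banach spaces X and Y, any bounded linear operator T : X → Y, and any n ≥ 1, the n-th Bernstein number of T is bounded by 2√2 times the n-th (dyadic) entropy number of T: b_n(T) ≤ 2√2 · e_n(T). -/
noncomputable section

/-- The `n`-th Bernstein number of a bounded linear operator `T : X → Y`:
the supremum over `n`-dimensional subspaces `L` of `X` of the infimum over
nonzero `x ∈ L` of `‖T x‖ / ‖x‖`. -/
def bernsteinNumber {X Y : Type*} [NormedAddCommGroup X] [NormedSpace ℝ X]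
    [NormedAddCommGroup Y] [NormedSpace ℝ Y] (n : ℕ) (T : X →L[ℝ] Y) : ℝ :=
  ⨆ L : {L : Submodule ℝ X // Module.finrank ℝ L = n},
    ⨅ x : {x : L.1 // x ≠ 0}, ‖T (x.1 : X)‖ / ‖(x.1 : X)‖

/-- The `n`-th (dyadic) entropy number of `T : X → Y`: the infimum of all `ε > 0`
such that `T(B_X)` can be covered by `2^(n-1)` balls of radius `ε` in `Y`. -/
def entropyNumber {X Y : Type*} [NormedAddCommGroup X] [NormedSpace ℝ X]
    [NormedAddCommGroup Y] [NormedSpace ℝ Y] (n : ℕ) (T : X →L[ℝ] Y) : ℝ :=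
  sInf {ε : ℝ | 0 < ε ∧ ∃ s : Finset Y, s.card ≤ 2 ^ (n - 1) ∧
    ∀ x : X, ‖x‖ ≤ 1 → ∃ y ∈ s, ‖T x - y‖ ≤ ε}

/-!
Let `L` be an `n`-dimensional subspace with `‖T x‖ ≥ b ‖x‖` on `L`, and identify `L` with `ℝⁿ`,
normed by `w ↦ ‖T w‖` with unit ball `U`. A covering of `T(B_X)` by `2^(n-1)` balls `B(y, ε)`
covers the ball of radius `b` by the sets `K_y = {w | ‖T w - y‖ ≤ ε}`, and `K_y - K_y ⊆ 2ε • U`.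
By the Brunn–Minkowski inequality `vol (K - K) ≥ 2ⁿ vol K`, so `vol K_y ≤ εⁿ vol U`, and comparing
volumes gives `bⁿ ≤ 2^(n-1) εⁿ`, hence `b ≤ 2ε`.

Brunn–Minkowski is proved in the multiplicative form `vol (A - B)² ≥ 4ⁿ vol A vol B` for compact
sets, by induction on the dimension: slicing `ℝ × ℝⁿ` along the first coordinate, the superlevel
sets of the slice volumes of `A`, `B` at the same relative level satisfy the one-dimensional
inequality `|S| + |T| ≤ |S - T|`, and their difference lies in a superlevel set for `A - B`.
Integrating over the level (layer cake) and applying AM–GM gives the next dimension.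
-/

open MeasureTheory Set
open scoped ENNReal NNReal Pointwise

theorem Real.volume_add_volume_le_volume_sub_of_isCompact {S T : Set ℝ} (hS : IsCompact S)
    (hT : IsCompact T) (hS₀ : S.Nonempty) (hT₀ : T.Nonempty) :
    volume S + volume T ≤ volume (S - T) := by
  set a := sSup S
  set b := sSup T
  have ha : a ∈ S := hS.sSup_mem hS₀
  have hb : b ∈ T := hT.sSup_mem hT₀
  -- `S - b` and `a - T` lie in `S - T` on either side of `a - b`
  set S' := (fun x => x + b) ⁻¹' S
  set T' := (fun x => a - x) ⁻¹' T
  have hT'meas : MeasurableSet T' := (hT.isClosed.preimage (by fun_prop)).measurableSet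
  have hS'T' : S' ∩ T' ⊆ {a - b} := by
    rintro x ⟨hxS, hxT⟩
    have h₁ : x + b ≤ a := le_csSup hS.bddAbove hxS
    have h₂ : a - x ≤ b := le_csSup hT.bddAbove hxT
    exact le_antisymm (by linarith) (by linarith)
  have hST : S' ∪ T' ⊆ S - T := by
    rintro x (hx | hx)
    · exact ⟨x + b, hx, b, hb, by ring⟩
    · exact ⟨a, ha, a - x, hx, by ring⟩
  calc volume S + volume T = volume S' + volume T' := by
        have hT' : T' = Neg.neg ⁻¹' ((a + ·) ⁻¹' T) := by ext; simp [T', sub_eq_add_neg]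
        rw [measure_preimage_add_right, hT', Measure.measure_preimage_neg, measure_preimage_add]
    _ = volume (S' ∪ T') + volume (S' ∩ T') := (measure_union_add_inter _ hT'meas).symm
    _ ≤ volume (S - T) := by
        rw [measure_mono_null hS'T' (measure_singleton _), add_zero]
        exact measure_mono hST

theorem Real.volume_add_volume_le_volume_sub {S T : Set ℝ} (hS : MeasurableSet S)
    (hT : MeasurableSet T) (hS₀ : S.Nonempty) (hT₀ : T.Nonempty) :
    volume S + volume T ≤ volume (S - T) := by
  obtain ⟨s, hs⟩ := hS₀
  obtain ⟨t, ht⟩ := hT₀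
  rw [hS.measure_eq_iSup_isCompact, hT.measure_eq_iSup_isCompact]
  simp only [iSup_and']
  refine ENNReal.biSup_add_biSup_le' ⟨∅, empty_subset _, isCompact_empty⟩
    ⟨∅, empty_subset _, isCompact_empty⟩ fun K ⟨hKS, hK⟩ K' ⟨hK'T, hK'⟩ => ?_
  -- adding a point makes the compact sets nonempty without decreasing their measure
  calc volume K + volume K' ≤ volume (insert s K) + volume (insert t K') := by
        gcongr <;> exact subset_insert _ _
    _ ≤ volume (insert s K - insert t K') :=
        Real.volume_add_volume_le_volume_sub_of_isCompact (hK.insert s) (hK'.insert t)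
          (insert_nonempty _ _) (insert_nonempty _ _)
    _ ≤ volume (S - T) :=
        measure_mono (sub_subset_sub (insert_subset hs hKS) (insert_subset ht hK'T))

section LayerCake

theorem Real.volume_Ioi_inter_setOf_ofReal_le (y : ℝ≥0∞) :
    volume (Ioi 0 ∩ {l : ℝ | ENNReal.ofReal l ≤ y}) = y := by
  rcases eq_or_ne y ⊤ with rfl | hy
  · simp
  · have : Ioi 0 ∩ {l : ℝ | ENNReal.ofReal l ≤ y} = Ioc 0 y.toReal := by
      ext l
      simp [ENNReal.ofReal_le_iff_le_toReal hy]
    rw [this, Real.volume_Ioc, sub_zero, ENNReal.ofReal_toReal hy]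

theorem Real.volume_Ioo_inter_setOf_ofReal_le {y : ℝ≥0∞} (hy : y ≤ 1) :
    volume (Ioo 0 1 ∩ {l : ℝ | ENNReal.ofReal l ≤ y}) = y := by
  have hy' : y ≠ ⊤ := ne_top_of_le_ne_top ENNReal.one_ne_top hy
  have hy₁ : y.toReal ≤ 1 := ENNReal.toReal_le_of_le_ofReal zero_le_one (by simpa using hy)
  apply le_antisymm
  · calc _ ≤ volume (Ioi 0 ∩ {l : ℝ | ENNReal.ofReal l ≤ y}) :=
          measure_mono (inter_subset_inter_left _ Ioo_subset_Ioi_self)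
      _ = y := Real.volume_Ioi_inter_setOf_ofReal_le y
  · calc y = volume (Ioo 0 y.toReal) := by
          rw [Real.volume_Ioo, sub_zero, ENNReal.ofReal_toReal hy']
      _ ≤ _ := by
          refine measure_mono fun l hl => ⟨⟨hl.1, hl.2.trans_le hy₁⟩, ?_⟩
          exact (ENNReal.ofReal_le_iff_le_toReal hy').2 hl.2.le

variable {α : Type*} [MeasurableSpace α] (μ : Measure α) [SFinite μ]
  {F : α → ℝ≥0∞} {M : ℝ≥0∞}

theorem setLIntegral_measure_ofReal_mul_le (hF : Measurable F) (hM₀ : M ≠ 0) (hM : M ≠ ⊤)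
    {I : Set ℝ} (hI : MeasurableSet I) :
    ∫⁻ l in I, μ {t | ENNReal.ofReal l * M ≤ F t} =
      ∫⁻ t, volume (I ∩ {l : ℝ | ENNReal.ofReal l ≤ F t / M}) ∂μ := by
  have hG : MeasurableSet {p : ℝ × α | ENNReal.ofReal p.1 * M ≤ F p.2} :=
    measurableSet_le (by fun_prop) (hF.comp measurable_snd)
  rw [show ∫⁻ l in I, μ {t | ENNReal.ofReal l * M ≤ F t} =
      ∫⁻ t, volume.restrict I {l | ENNReal.ofReal l * M ≤ F t} ∂μ from
    (Measure.prod_apply hG).symm.trans (Measure.prod_apply_symm hG)]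
  congr 1 with t
  rw [Measure.restrict_apply' hI, inter_comm]
  congr 2 with l
  exact (ENNReal.le_div_iff_mul_le (Or.inl hM₀) (Or.inl hM)).symm

theorem lintegral_Ioi_measure_ofReal_mul_le (hF : Measurable F) (hM₀ : M ≠ 0) (hM : M ≠ ⊤) :
    ∫⁻ l in Ioi 0, μ {t | ENNReal.ofReal l * M ≤ F t} = (∫⁻ t, F t ∂μ) / M := by
  simp only [setLIntegral_measure_ofReal_mul_le μ hF hM₀ hM measurableSet_Ioi,
    Real.volume_Ioi_inter_setOf_ofReal_le]
  simp only [div_eq_mul_inv]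
  exact lintegral_mul_const' _ _ (ENNReal.inv_ne_top.2 hM₀)

theorem lintegral_Ioo_measure_ofReal_mul_le (hF : Measurable F) (hM₀ : M ≠ 0) (hM : M ≠ ⊤)
    (hFM : ∀ t, F t ≤ M) :
    ∫⁻ l in Ioo 0 1, μ {t | ENNReal.ofReal l * M ≤ F t} = (∫⁻ t, F t ∂μ) / M := by
  have hFM' t : F t / M ≤ 1 := ENNReal.div_le_of_le_mul (by simpa using hFM t)
  simp only [setLIntegral_measure_ofReal_mul_le μ hF hM₀ hM measurableSet_Ioo,
    Real.volume_Ioo_inter_setOf_ofReal_le (hFM' _)]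
  simp only [div_eq_mul_inv]
  exact lintegral_mul_const' _ _ (ENNReal.inv_ne_top.2 hM₀)

theorem lintegral_div_add_lintegral_div_le {f g h : α → ℝ≥0∞} (hf : Measurable f)
    (hg : Measurable g) (hh : Measurable h) {a b c : ℝ≥0∞} (ha₀ : a ≠ 0) (ha : a ≠ ⊤)
    (hb₀ : b ≠ 0) (hb : b ≠ ⊤) (hc₀ : c ≠ 0) (hc : c ≠ ⊤) (hfa : ∀ t, f t ≤ a)
    (hgb : ∀ t, g t ≤ b)
    (H : ∀ l ∈ Ioo (0 : ℝ) 1, μ {t | ENNReal.ofReal l * a ≤ f t} +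
      μ {t | ENNReal.ofReal l * b ≤ g t} ≤ μ {t | ENNReal.ofReal l * c ≤ h t}) :
    (∫⁻ t, f t ∂μ) / a + (∫⁻ t, g t ∂μ) / b ≤ (∫⁻ t, h t ∂μ) / c :=
  calc (∫⁻ t, f t ∂μ) / a + (∫⁻ t, g t ∂μ) / b
      = (∫⁻ l in Ioo 0 1, μ {t | ENNReal.ofReal l * a ≤ f t}) +
          ∫⁻ l in Ioo 0 1, μ {t | ENNReal.ofReal l * b ≤ g t} := by
        rw [lintegral_Ioo_measure_ofReal_mul_le μ hf ha₀ ha hfa,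
          lintegral_Ioo_measure_ofReal_mul_le μ hg hb₀ hb hgb]
    _ ≤ ∫⁻ l in Ioo 0 1, (μ {t | ENNReal.ofReal l * a ≤ f t} +
          μ {t | ENNReal.ofReal l * b ≤ g t}) := le_lintegral_add _ _
    _ ≤ ∫⁻ l in Ioo 0 1, μ {t | ENNReal.ofReal l * c ≤ h t} :=
        setLIntegral_mono' measurableSet_Ioo H
    _ ≤ ∫⁻ l in Ioi 0, μ {t | ENNReal.ofReal l * c ≤ h t} := lintegral_mono_set Ioo_subset_Ioi_self
    _ = (∫⁻ t, h t ∂μ) / c := lintegral_Ioi_measure_ofReal_mul_le μ hh hc₀ hc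

end LayerCake

theorem ENNReal.four_mul_le_sq_add (x y : ℝ≥0∞) : 4 * x * y ≤ (x + y) ^ 2 := by
  rcases eq_or_ne x ⊤ with rfl | hx
  · simp
  rcases eq_or_ne y ⊤ with rfl | hy
  · simp
  lift x to ℝ≥0 using hx
  lift y to ℝ≥0 using hy
  exact_mod_cast _root_.four_mul_le_sq_add x y

theorem ENNReal.sq_mul_sq_mul_le_sq_of_div_add_div_le {a b c k x y z : ℝ≥0∞} (ha₀ : a ≠ 0)
    (ha : a ≠ ⊤) (hb₀ : b ≠ 0) (hb : b ≠ ⊤) (hc₀ : c ≠ 0) (hc : c ≠ ⊤)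
    (habc : c ^ 2 = k ^ 2 * (a * b)) (h : x / a + y / b ≤ z / c) :
    (2 * k) ^ 2 * (x * y) ≤ z ^ 2 :=
  calc (2 * k) ^ 2 * (x * y) = (2 * k) ^ 2 * ((x / a * a) * (y / b * b)) := by
        rw [ENNReal.div_mul_cancel ha₀ ha, ENNReal.div_mul_cancel hb₀ hb]
    _ = 4 * (x / a) * (y / b) * c ^ 2 := by rw [habc]; ring
    _ ≤ (x / a + y / b) ^ 2 * c ^ 2 := by gcongr; exact ENNReal.four_mul_le_sq_add _ _
    _ ≤ (z / c * c) ^ 2 := by rw [mul_pow]; gcongr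
    _ = z ^ 2 := by rw [ENNReal.div_mul_cancel hc₀ hc]

theorem nonempty_setOf_ofReal_mul_le_of_isLUB {ι : Type*} {f : ι → ℝ≥0∞} {M : ℝ≥0}
    (hM₀ : M ≠ 0) (hM : IsLUB (range f) M) {l : ℝ} (hl : l < 1) :
    {t | ENNReal.ofReal l * M ≤ f t}.Nonempty := by
  have : ENNReal.ofReal l * M < M := ENNReal.mul_lt_of_lt_div <| by
    rwa [ENNReal.div_self (by simpa using hM₀) ENNReal.coe_ne_top, ENNReal.ofReal_lt_one]
  obtain ⟨_, ⟨t, rfl⟩, ht⟩ := (lt_isLUB_iff hM).1 this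
  exact ⟨t, ht.le⟩

theorem exists_isLUB_measure_prodMk_preimage {E : Type*} [TopologicalSpace E] [T2Space E]
    [MeasurableSpace E] [BorelSpace E] {μ : Measure E} [SFinite μ] [IsFiniteMeasureOnCompacts μ]
    {K : Set (ℝ × E)} (hK : IsCompact K) (hK₀ : (volume.prod μ) K ≠ 0) :
    ∃ M : ℝ≥0, M ≠ 0 ∧ IsLUB (range fun t => μ (Prod.mk t ⁻¹' K)) M := by
  have hM : ⨆ t, μ (Prod.mk t ⁻¹' K) ≠ ⊤ := by
    refine ne_top_of_le_ne_top (hK.image continuous_snd).measure_lt_top.ne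
      (iSup_le fun t => measure_mono ?_)
    exact fun w hw => ⟨(t, w), hw, rfl⟩
  have hM₀ : ⨆ t, μ (Prod.mk t ⁻¹' K) ≠ 0 := by
    rw [Measure.prod_apply hK.measurableSet] at hK₀
    contrapose! hK₀
    simp [ENNReal.iSup_eq_zero.1 hK₀]
  refine ⟨(⨆ t, μ (Prod.mk t ⁻¹' K)).toNNReal, ENNReal.toNNReal_ne_zero.2 ⟨hM₀, hM⟩, ?_⟩
  rw [ENNReal.coe_toNNReal hM]
  exact isLUB_iSup

/-- `μ (A - B) ≥ k √(μ A μ B)` for compact `A`, `B`, squared to stay in `ℝ≥0∞`. -/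
def MultiplicativeBrunnMinkowski {E : Type*} [MeasurableSpace E] [TopologicalSpace E] [Sub E]
    (μ : Measure E) (k : ℝ≥0) : Prop :=
  ∀ A B : Set E, IsCompact A → IsCompact B → (k : ℝ≥0∞) ^ 2 * (μ A * μ B) ≤ μ (A - B) ^ 2

namespace MultiplicativeBrunnMinkowski

theorem mul_measure_le_measure_sub_self {E : Type*}
    [MeasurableSpace E] [TopologicalSpace E] [Sub E] {μ : Measure E} {k : ℝ≥0}
    (hμ : MultiplicativeBrunnMinkowski μ k) {K : Set E} (hK : IsCompact K) :
    k * μ K ≤ μ (K - K) := by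
  rw [← ENNReal.pow_le_pow_left_iff two_ne_zero, mul_pow, sq (μ K)]
  exact hμ K K hK hK

theorem of_measurePreserving {E F : Type*} [Sub E] [TopologicalSpace E] [MeasurableSpace E]
    [Sub F] [TopologicalSpace F] [MeasurableSpace F] {μ : Measure E} {ν : Measure F} {k : ℝ≥0}
    (hν : MultiplicativeBrunnMinkowski ν k) (e : E ≃ᵐ F)
    (he : MeasurePreserving e μ ν) (he_cont : Continuous e)
    (he_sub : ∀ x y, e (x - y) = e x - e y) : MultiplicativeBrunnMinkowski μ k := by
  intro A B hA hB
  have hμ (S : Set E) : μ S = ν (e '' S) := by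
    rw [e.image_eq_preimage_symm, he.symm.measure_preimage_equiv]
  have himage : e '' (A - B) = e '' A - e '' B := by
    simp only [← image2_sub]
    exact image_image2_distrib he_sub
  rw [hμ, hμ, hμ, himage]
  exact hν _ _ (hA.image he_cont) (hB.image he_cont)

section

variable {E : Type*} [AddCommGroup E] [TopologicalSpace E] [T2Space E] [MeasurableSpace E]
  {μ : Measure E} {k : ℝ≥0}

theorem sub_superlevel_subset (hμ : MultiplicativeBrunnMinkowski μ k) {A B : Set (ℝ × E)}
    (hA : IsCompact A) (hB : IsCompact B) {a b c : ℝ≥0∞} (hc : c ^ 2 ≤ k ^ 2 * (a * b)) :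
    {t | a ≤ μ (Prod.mk t ⁻¹' A)} - {t | b ≤ μ (Prod.mk t ⁻¹' B)} ⊆
      {s | c ≤ μ (Prod.mk s ⁻¹' (A - B))} := by
  have slice {K : Set (ℝ × E)} (hK : IsCompact K) t : IsCompact (Prod.mk t ⁻¹' K) :=
    (hK.image continuous_snd).of_isClosed_subset (hK.isClosed.preimage (by fun_prop))
      fun w hw => ⟨(t, w), hw, rfl⟩
  rintro _ ⟨t₁, ht₁, t₂, ht₂, rfl⟩
  have hsub : Prod.mk t₁ ⁻¹' A - Prod.mk t₂ ⁻¹' B ⊆ Prod.mk (t₁ - t₂) ⁻¹' (A - B) := by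
    rintro _ ⟨w₁, hw₁, w₂, hw₂, rfl⟩
    exact ⟨_, hw₁, _, hw₂, rfl⟩
  change c ≤ _
  rw [← ENNReal.pow_le_pow_left_iff two_ne_zero]
  calc c ^ 2 ≤ k ^ 2 * (a * b) := hc
    _ ≤ k ^ 2 * (μ (Prod.mk t₁ ⁻¹' A) * μ (Prod.mk t₂ ⁻¹' B)) := by gcongr <;> assumption
    _ ≤ μ (Prod.mk t₁ ⁻¹' A - Prod.mk t₂ ⁻¹' B) ^ 2 := hμ _ _ (slice hA t₁) (slice hB t₂)
    _ ≤ _ := by gcongr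

theorem prod_volume [IsTopologicalAddGroup E] [BorelSpace E] [SigmaFinite μ]
    [IsFiniteMeasureOnCompacts μ] (hμ : MultiplicativeBrunnMinkowski μ k) :
    MultiplicativeBrunnMinkowski ((volume : Measure ℝ).prod μ) (2 * k) := by
  intro A B hA hB
  rcases eq_or_ne k 0 with rfl | hk
  · simp
  rcases eq_or_ne ((volume.prod μ) A) 0 with hA₀ | hA₀
  · simp [hA₀]
  rcases eq_or_ne ((volume.prod μ) B) 0 with hB₀ | hB₀
  · simp [hB₀]
  have hC : IsCompact (A - B) := by rw [sub_eq_add_neg]; exact hA.add hB.neg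
  obtain ⟨a, ha₀, ha⟩ := exists_isLUB_measure_prodMk_preimage hA hA₀
  obtain ⟨b, hb₀, hb⟩ := exists_isLUB_measure_prodMk_preimage hB hB₀
  set c : ℝ≥0 := k * NNReal.sqrt (a * b)
  have hc₀ : c ≠ 0 := mul_ne_zero hk (by simp [ha₀, hb₀])
  have hc : (c : ℝ≥0∞) ^ 2 = k ^ 2 * (a * b) := by
    rw [← ENNReal.coe_pow, mul_pow, NNReal.sq_sqrt]
    push_cast
    rfl
  have superlevel {l : ℝ} (hl : l ∈ Ioo 0 1) :
      volume {t | ENNReal.ofReal l * a ≤ μ (Prod.mk t ⁻¹' A)} +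
          volume {t | ENNReal.ofReal l * b ≤ μ (Prod.mk t ⁻¹' B)} ≤
        volume {s | ENNReal.ofReal l * c ≤ μ (Prod.mk s ⁻¹' (A - B))} := by
    refine (Real.volume_add_volume_le_volume_sub
      (measurableSet_le measurable_const (measurable_measure_prodMk_left hA.measurableSet))
      (measurableSet_le measurable_const (measurable_measure_prodMk_left hB.measurableSet))
      (nonempty_setOf_ofReal_mul_le_of_isLUB ha₀ ha hl.2)
      (nonempty_setOf_ofReal_mul_le_of_isLUB hb₀ hb hl.2)).trans
      (measure_mono (hμ.sub_superlevel_subset hA hB ?_))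
    rw [mul_pow, hc]
    exact le_of_eq (by ring)
  have hsum : (volume.prod μ) A / a + (volume.prod μ) B / b ≤ (volume.prod μ) (A - B) / c := by
    simp only [Measure.prod_apply hA.measurableSet, Measure.prod_apply hB.measurableSet,
      Measure.prod_apply hC.measurableSet]
    exact lintegral_div_add_lintegral_div_le volume
      (measurable_measure_prodMk_left hA.measurableSet)
      (measurable_measure_prodMk_left hB.measurableSet)
      (measurable_measure_prodMk_left hC.measurableSet) (by simpa using ha₀) ENNReal.coe_ne_top
      (by simpa using hb₀) ENNReal.coe_ne_top (by simpa using hc₀) ENNReal.coe_ne_top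
      (fun t => ha.1 ⟨t, rfl⟩) (fun t => hb.1 ⟨t, rfl⟩) fun l hl => superlevel hl
  push_cast
  exact ENNReal.sq_mul_sq_mul_le_sq_of_div_add_div_le (by simpa using ha₀) ENNReal.coe_ne_top
    (by simpa using hb₀) ENNReal.coe_ne_top (by simpa using hc₀) ENNReal.coe_ne_top hc hsum

end

end MultiplicativeBrunnMinkowski

theorem multiplicativeBrunnMinkowski_volume_pi (n : ℕ) :
    MultiplicativeBrunnMinkowski (volume : Measure (Fin n → ℝ)) (2 ^ n) := by
  induction n with
  | zero =>
    intro A B _ _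
    rcases A.eq_empty_or_nonempty with rfl | hA
    · simp
    rcases B.eq_empty_or_nonempty with rfl | hB
    · simp
    rw [(hA.sub hB).eq_univ, hA.eq_univ, hB.eq_univ]
    simp [sq]
  | succ n ih =>
    rw [pow_succ']
    refine ih.prod_volume.of_measurePreserving (MeasurableEquiv.piFinSuccAbove (fun _ => ℝ) 0)
      (volume_preserving_piFinSuccAbove (fun _ => ℝ) 0) ?_ fun x y => rfl
    change Continuous fun x : Fin (n + 1) → ℝ => (x 0, fun j : Fin n => x j.succ)
    fun_prop

section

variable {X Y : Type*} [NormedAddCommGroup X] [NormedSpace ℝ X]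
  [NormedAddCommGroup Y] [NormedSpace ℝ Y]

theorem volume_preimage_closedBall_zero {n : ℕ} (ψ : (Fin n → ℝ) →ₗ[ℝ] Y) {R : ℝ} (hR : 0 < R) :
    volume (ψ ⁻¹' Metric.closedBall 0 R) =
      ENNReal.ofReal (R ^ n) * volume (ψ ⁻¹' Metric.closedBall 0 1) := by
  set p : Seminorm ℝ (Fin n → ℝ) := (normSeminorm ℝ Y).comp ψ
  have hp (R : ℝ) : ψ ⁻¹' Metric.closedBall 0 R = p.closedBall 0 R := by ext; simp [p]
  have hsmul : R • p.closedBall 0 1 = p.closedBall 0 R := by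
    rw [Seminorm.smul_closedBall_zero (by simpa using hR.ne'), Real.norm_of_nonneg hR.le, mul_one]
  rw [hp, hp, ← hsmul, Measure.addHaar_smul_of_nonneg _ hR.le, Module.finrank_fin_fun]

theorem volume_preimage_closedBall_le {n : ℕ} {ψ : (Fin n → ℝ) →ₗ[ℝ] Y}
    (hψ : Function.Injective ψ) (y : Y) {ε : ℝ} (hε : 0 < ε) :
    volume (ψ ⁻¹' Metric.closedBall y ε) ≤
      ENNReal.ofReal (ε ^ n) * volume (ψ ⁻¹' Metric.closedBall 0 1) := by
  obtain ⟨C, -, hC⟩ := ψ.injective_iff_antilipschitz.1 hψ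
  have hK : IsCompact (ψ ⁻¹' Metric.closedBall y ε) :=
    Metric.isCompact_of_isClosed_isBounded
      (Metric.isClosed_closedBall.preimage ψ.continuous_of_finiteDimensional)
      (hC.isBounded_preimage Metric.isBounded_closedBall)
  have hsub : ψ ⁻¹' Metric.closedBall y ε - ψ ⁻¹' Metric.closedBall y ε ⊆
      ψ ⁻¹' Metric.closedBall 0 (2 * ε) := by
    rintro _ ⟨w₁, hw₁, w₂, hw₂, rfl⟩
    rw [mem_preimage, map_sub, mem_closedBall_zero_iff, two_mul]
    exact (norm_sub_le_norm_sub_add_norm_sub _ y _).trans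
      (add_le_add (mem_closedBall_iff_norm.1 hw₁) (by rw [← dist_eq_norm']; exact hw₂))
  -- Brunn–Minkowski: `2ⁿ vol K ≤ vol (K - K) ≤ (2ε)ⁿ vol U`
  have := ((multiplicativeBrunnMinkowski_volume_pi n).mul_measure_le_measure_sub_self hK).trans
    ((measure_mono hsub).trans_eq (volume_preimage_closedBall_zero ψ (by positivity)))
  rw [mul_pow, ENNReal.ofReal_mul (by positivity), mul_assoc, ENNReal.ofReal_pow zero_le_two,
    ENNReal.ofReal_ofNat, ENNReal.coe_pow, ENNReal.coe_ofNat] at this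
  exact (ENNReal.mul_le_mul_iff_right (by simp) (by simp)).1 this

theorem pow_le_card_mul_pow_of_covering {n : ℕ} {ψ : (Fin n → ℝ) →ₗ[ℝ] Y}
    (hψ : Function.Injective ψ) {r ε : ℝ} (hr : 0 < r) (hε : 0 < ε) (s : Finset Y)
    (hs : ∀ w, ‖ψ w‖ ≤ r → ∃ y ∈ s, ‖ψ w - y‖ ≤ ε) :
    r ^ n ≤ s.card * ε ^ n := by
  set U := ψ ⁻¹' Metric.closedBall 0 1
  have hU₀ : volume U ≠ 0 := by
    have hV : IsOpen {w | ‖ψ w‖ < 1} :=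
      isOpen_lt (continuous_norm.comp ψ.continuous_of_finiteDimensional) continuous_const
    refine ((hV.measure_pos volume ⟨0, by simp⟩).trans_le (measure_mono fun w hw => ?_)).ne'
    simpa [U] using le_of_lt hw
  have hU : volume U ≠ ⊤ := by
    obtain ⟨C, -, hC⟩ := ψ.injective_iff_antilipschitz.1 hψ
    exact (hC.isBounded_preimage Metric.isBounded_closedBall).measure_lt_top.ne
  have hcover : ψ ⁻¹' Metric.closedBall 0 r ⊆ ⋃ y ∈ s, ψ ⁻¹' Metric.closedBall y ε := by
    intro w hw
    rw [mem_preimage, mem_closedBall_zero_iff] at hw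
    obtain ⟨y, hy, hwy⟩ := hs w hw
    exact mem_biUnion hy (mem_closedBall_iff_norm.2 hwy)
  have : ENNReal.ofReal (r ^ n) * volume U ≤ ENNReal.ofReal (s.card * ε ^ n) * volume U :=
    calc ENNReal.ofReal (r ^ n) * volume U = volume (ψ ⁻¹' Metric.closedBall 0 r) :=
          (volume_preimage_closedBall_zero ψ hr).symm
      _ ≤ ∑ y ∈ s, volume (ψ ⁻¹' Metric.closedBall y ε) :=
          (measure_mono hcover).trans (measure_biUnion_finset_le _ _)
      _ ≤ ∑ y ∈ s, ENNReal.ofReal (ε ^ n) * volume U :=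
          Finset.sum_le_sum fun y _ => volume_preimage_closedBall_le hψ y hε
      _ = ENNReal.ofReal (s.card * ε ^ n) * volume U := by
          rw [Finset.sum_const, nsmul_eq_mul, ENNReal.ofReal_mul (by positivity), mul_assoc]
          simp
  exact (ENNReal.ofReal_le_ofReal_iff (by positivity)).1
    ((ENNReal.mul_le_mul_iff_left hU₀ hU).1 this)

theorem mul_norm_le_norm_of_iInf (T : X →L[ℝ] Y) {L : Submodule ℝ X} (x : L) :
    (⨅ x : {x : L // x ≠ 0}, ‖T (x.1 : X)‖ / ‖(x.1 : X)‖) * ‖(x : X)‖ ≤ ‖T x‖ := by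
  rcases eq_or_ne x 0 with rfl | hx
  · simp
  have hx' : 0 < ‖(x : X)‖ := by simpa using hx
  rw [← le_div_iff₀ hx']
  exact ciInf_le ⟨0, by rintro _ ⟨x, rfl⟩; positivity⟩ (⟨x, hx⟩ : {x : L // x ≠ 0})

theorem iInf_norm_div_norm_le_two_mul (T : X →L[ℝ] Y) {n : ℕ} (hn : 1 ≤ n) {L : Submodule ℝ X}
    (hL : Module.finrank ℝ L = n) {ε : ℝ} (hε : 0 < ε) (s : Finset Y)
    (hs : s.card ≤ 2 ^ (n - 1)) (hcov : ∀ x : X, ‖x‖ ≤ 1 → ∃ y ∈ s, ‖T x - y‖ ≤ ε) :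
    ⨅ x : {x : L // x ≠ 0}, ‖T (x.1 : X)‖ / ‖(x.1 : X)‖ ≤ 2 * ε := by
  set b := ⨅ x : {x : L // x ≠ 0}, ‖T (x.1 : X)‖ / ‖(x.1 : X)‖
  rcases le_or_gt b 0 with hb | hb
  · linarith
  have : FiniteDimensional ℝ L := .of_finrank_pos (by omega)
  let φ : (Fin n → ℝ) ≃ₗ[ℝ] L := .ofFinrankEq _ _ (by simp [hL])
  let ψ : (Fin n → ℝ) →ₗ[ℝ] Y := (T : X →ₗ[ℝ] Y) ∘ₗ L.subtype ∘ₗ (φ : (Fin n → ℝ) →ₗ[ℝ] L)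
  have hψ (w : Fin n → ℝ) : b * ‖(φ w : X)‖ ≤ ‖ψ w‖ := mul_norm_le_norm_of_iInf T (φ w)
  have hψ_inj : Function.Injective ψ := by
    rw [← LinearMap.ker_eq_bot, LinearMap.ker_eq_bot']
    intro w hw
    have : b * ‖(φ w : X)‖ ≤ 0 := by simpa [hw] using hψ w
    simpa [hb.ne'] using le_antisymm (nonpos_of_mul_nonpos_right this hb) (norm_nonneg _)
  have hcover (w : Fin n → ℝ) (hw : ‖ψ w‖ ≤ b) : ∃ y ∈ s, ‖ψ w - y‖ ≤ ε :=
    hcov (φ w : X) (le_of_mul_le_mul_left (by linarith [hψ w]) hb)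
  have key : b ^ n ≤ (2 * ε) ^ n :=
    calc b ^ n ≤ s.card * ε ^ n := pow_le_card_mul_pow_of_covering hψ_inj hb hε s hcover
      _ ≤ 2 ^ n * ε ^ n := by
          gcongr
          exact_mod_cast hs.trans (Nat.pow_le_pow_right two_pos (by omega))
      _ = (2 * ε) ^ n := (mul_pow _ _ _).symm
  exact (pow_le_pow_iff_left₀ hb.le (by positivity) (by omega)).1 key

theorem le_entropyNumber (T : X →L[ℝ] Y) (n : ℕ) {a : ℝ}
    (h : ∀ ε > 0, ∀ s : Finset Y, s.card ≤ 2 ^ (n - 1) →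
      (∀ x : X, ‖x‖ ≤ 1 → ∃ y ∈ s, ‖T x - y‖ ≤ ε) → a ≤ ε) :
    a ≤ entropyNumber n T := by
  refine le_csInf ⟨‖T‖ + 1, by positivity, {0}, by simp [Nat.one_le_two_pow], fun x hx => ?_⟩
    fun ε ⟨hε, s, hs, hcov⟩ => h ε hε s hs hcov
  refine ⟨0, Finset.mem_singleton_self 0, ?_⟩
  rw [sub_zero]
  exact (T.le_of_opNorm_le le_rfl x).trans (by nlinarith [norm_nonneg T])

theorem entropyNumber_nonneg (T : X →L[ℝ] Y) (n : ℕ) : 0 ≤ entropyNumber n T :=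
  Real.sInf_nonneg fun _ hε => hε.1.le

theorem bernsteinNumber_le_two_mul_entropyNumber (T : X →L[ℝ] Y) {n : ℕ} (hn : 1 ≤ n) :
    bernsteinNumber n T ≤ 2 * entropyNumber n T := by
  refine Real.iSup_le (fun L => ?_) (by linarith [entropyNumber_nonneg T n])
  rw [← div_le_iff₀' two_pos]
  exact le_entropyNumber T n fun ε hε s hs hcov =>
    (div_le_iff₀' two_pos).2 (iInf_norm_div_norm_le_two_mul T hn L.2 hε s hs hcov)

end

theorem bernstein_le_two_sqrt_two_mul_entropy_general
    {X Y : Type*} [NormedAddCommGroup X] [NormedSpace ℝ X]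
    [NormedAddCommGroup Y] [NormedSpace ℝ Y]
    (T : X →L[ℝ] Y) (n : ℕ) (hn : 1 ≤ n) :
    bernsteinNumber n T ≤ 2 * Real.sqrt 2 * entropyNumber n T := by
  have h2 : (2 : ℝ) ≤ 2 * Real.sqrt 2 :=
    le_mul_of_one_le_right zero_le_two (Real.one_le_sqrt.2 one_le_two)
  exact (bernsteinNumber_le_two_mul_entropyNumber T hn).trans
    (mul_le_mul_of_nonneg_right h2 (entropyNumber_nonneg T n))

/-- For Banach spaces `X`, `Y`, any `T ∈ L(X,Y)` and any `n ≥ 1`,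
`b_n(T) ≤ 2√2 · e_n(T)`. -/
theorem bernstein_le_two_sqrt_two_mul_entropy
    {X Y : Type*} [NormedAddCommGroup X] [NormedSpace ℝ X] [CompleteSpace X]
    [NormedAddCommGroup Y] [NormedSpace ℝ Y] [CompleteSpace Y]
    (T : X →L[ℝ] Y) (n : ℕ) (hn : 1 ≤ n) :
    bernsteinNumber n T ≤ 2 * Real.sqrt 2 * entropyNumber n T :=
  bernstein_le_two_sqrt_two_mul_entropy_general T n hn
end
end

section
/- Let X, Y be Banach spaces with dim X = dim Y = m < ∞, and let T : X → Y be an invertible bounded linear operator. Then for every n ∈ ℕ with n ≤ m, one has b_n(T) · c_{m−n+1}(T^{−1}) = 1, where b_n denotes Bernstein numbers and c_k denotes Gelfand numbers. -/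
/-!
For an `n`-dimensional subspace `L ⊆ X`, the infimum of `‖T x‖ / ‖x‖` over `L` is
`‖T⁻¹|_{T L}‖⁻¹`, and `L ↦ T L` is a bijection onto the `n`-dimensional subspaces of `Y`.
Hence `b_n(T) = (inf_{dim M = n} ‖T⁻¹|_M‖)⁻¹`. The subspaces of `Y` of codimension `< m - n + 1`
are those of dimension `≥ n`; each contains one of dimension exactly `n`, and the norm of a
restriction only decreases on a smaller subspace, so `c_{m-n+1}(T⁻¹)` is the same infimum.
It is positive, being bounded below by `‖T‖⁻¹`.
-/

noncomputable section

/-- The `n`-th Gelfand number: infimum of the norm of the restriction of `T`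
to closed subspaces `M` of codimension `< n`. -/
def gelfandNumber {X Y : Type*} [NormedAddCommGroup X] [NormedSpace ℝ X]
    [NormedAddCommGroup Y] [NormedSpace ℝ Y] (n : ℕ) (T : X →L[ℝ] Y) : ℝ :=
  sInf {c : ℝ | ∃ M : Submodule ℝ X, IsClosed (M : Set X) ∧
    FiniteDimensional ℝ (X ⧸ M) ∧ Module.finrank ℝ (X ⧸ M) < n ∧
    ‖T.comp M.subtypeL‖ = c}

open Module

theorem Real.iSup_inv_eq_inv_iInf {ι : Sort*} [Nonempty ι] {f : ι → ℝ} {a : ℝ} (ha : 0 < a)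
    (hf : ∀ i, a ≤ f i) : ⨆ i, (f i)⁻¹ = (⨅ i, f i)⁻¹ := by
  have hinf : 0 < ⨅ i, f i := ha.trans_le (le_ciInf hf)
  have hbdd : BddAbove (Set.range fun i ↦ (f i)⁻¹) :=
    ⟨a⁻¹, by rintro _ ⟨i, rfl⟩; exact inv_anti₀ ha (hf i)⟩
  refine le_antisymm
    (ciSup_le fun i ↦ inv_anti₀ hinf (ciInf_le ⟨a, by rintro _ ⟨j, rfl⟩; exact hf j⟩ i)) ?_
  have hsup : 0 < ⨆ i, (f i)⁻¹ :=
    (inv_pos.2 (ha.trans_le (hf (Classical.arbitrary ι)))).trans_le (le_ciSup hbdd _)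
  refine inv_le_of_inv_le₀ hsup (le_ciInf fun i ↦ ?_)
  rw [← inv_inv (f i)]
  exact inv_anti₀ (inv_pos.2 (ha.trans_le (hf i))) (le_ciSup hbdd i)

theorem Submodule.exists_le_finrank_eq {K V : Type*} [DivisionRing K] [AddCommGroup V]
    [Module K V] (M : Submodule K V) {k : ℕ} (hk : k ≤ finrank K M) :
    ∃ N ≤ M, finrank K N = k := by
  obtain ⟨f, hf⟩ := exists_linearIndependent_of_le_finrank hk
  refine ⟨span K (Set.range (M.subtype ∘ f)), span_le.2 ?_, ?_⟩
  · rintro _ ⟨i, rfl⟩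
    exact (f i).2
  · rw [finrank_span_eq_card (hf.map' M.subtype M.ker_subtype), Fintype.card_fin]

theorem Submodule.nonempty_finrank_eq {K V : Type*} [DivisionRing K] [AddCommGroup V]
    [Module K V] {k : ℕ} (hk : k ≤ finrank K V) :
    Nonempty {M : Submodule K V // finrank K M = k} := by
  obtain ⟨M, -, hM⟩ := (⊤ : Submodule K V).exists_le_finrank_eq (k := k) (by rwa [finrank_top])
  exact ⟨⟨M, hM⟩⟩

section

variable {𝕜 E F : Type*} [NontriviallyNormedField 𝕜] [NormedAddCommGroup E] [NormedSpace 𝕜 E]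
  [NormedAddCommGroup F] [NormedSpace 𝕜 F]

theorem ContinuousLinearMap.norm_comp_subtypeL_mono (S : E →L[𝕜] F) {M N : Submodule 𝕜 E}
    (h : N ≤ M) : ‖S.comp N.subtypeL‖ ≤ ‖S.comp M.subtypeL‖ :=
  (S.comp N.subtypeL).opNorm_le_bound (norm_nonneg _) fun x ↦
    (S.comp M.subtypeL).le_opNorm ⟨x, h x.2⟩

theorem ContinuousLinearEquiv.iInf_norm_div_norm_eq_inv_norm_symm (e : E ≃L[𝕜] F) :
    ⨅ x : {x : E // x ≠ 0}, ‖e x‖ / ‖(x : E)‖ = ‖(e.symm : F →L[𝕜] E)‖⁻¹ := by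
  rcases subsingleton_or_nontrivial E with hE | hE
  · have : Subsingleton F := e.symm.toEquiv.subsingleton
    have : IsEmpty {x : E // x ≠ 0} := ⟨fun x ↦ x.2 (Subsingleton.elim _ _)⟩
    simp [Real.iInf_of_isEmpty, ContinuousLinearMap.opNorm_subsingleton]
  set b := ⨅ x : {x : E // x ≠ 0}, ‖e x‖ / ‖(x : E)‖
  have hsymm := e.norm_symm_pos
  have hlow : ∀ x : {x : E // x ≠ 0}, ‖(e.symm : F →L[𝕜] E)‖⁻¹ ≤ ‖e x‖ / ‖(x : E)‖ := by
    rintro ⟨x, hx⟩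
    rw [le_div_iff₀ (norm_pos_iff.2 hx), inv_mul_le_iff₀ hsymm]
    simpa using (e.symm : F →L[𝕜] E).le_opNorm (e x)
  have : Nonempty {x : E // x ≠ 0} := let ⟨x, hx⟩ := exists_ne (0 : E); ⟨⟨x, hx⟩⟩
  have hb : 0 < b := (inv_pos.2 hsymm).trans_le (le_ciInf hlow)
  refine le_antisymm (le_inv_of_le_inv₀ hsymm ?_) (le_ciInf hlow)
  refine (e.symm : F →L[𝕜] E).opNorm_le_bound (by positivity) fun y ↦ ?_
  rcases eq_or_ne y 0 with rfl | hy
  · simp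
  have hx : e.symm y ≠ 0 := by simpa using hy
  have hby : b ≤ ‖y‖ / ‖e.symm y‖ := by
    simpa only [apply_symm_apply] using
      ciInf_le (f := fun x : {x : E // x ≠ 0} ↦ ‖e x‖ / ‖(x : E)‖)
        ⟨0, by rintro _ ⟨x, rfl⟩; positivity⟩ ⟨e.symm y, hx⟩
  rwa [coe_coe, inv_mul_eq_div, le_div_iff₀ hb, ← le_div_iff₀' (norm_pos_iff.2 hx)]

theorem ContinuousLinearEquiv.inv_norm_le_norm_symm_comp_subtypeL (T : E ≃L[𝕜] F)
    (M : Submodule 𝕜 F) [Nontrivial M] :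
    ‖(T : E →L[𝕜] F)‖⁻¹ ≤ ‖(T.symm : F →L[𝕜] E).comp M.subtypeL‖ := by
  rcases (norm_nonneg (T : E →L[𝕜] F)).eq_or_lt with hT | hT
  · simp [← hT]
  rw [inv_le_iff_one_le_mul₀' hT]
  calc 1 = ‖M.subtypeL‖ := M.norm_subtypeL.symm
    _ = ‖(T : E →L[𝕜] F).comp ((T.symm : F →L[𝕜] E).comp M.subtypeL)‖ := by
      congr 1; ext; simp
    _ ≤ _ := ContinuousLinearMap.opNorm_comp_le _ _

end

section

variable {X Y : Type*} [NormedAddCommGroup X] [NormedSpace ℝ X] [NormedAddCommGroup Y]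
  [NormedSpace ℝ Y]

theorem bernsteinNumber_eq_iSup_inv_norm_symm_comp_subtypeL (T : X ≃L[ℝ] Y) (n : ℕ) :
    bernsteinNumber n (T : X →L[ℝ] Y) = ⨆ M : {M : Submodule ℝ Y // finrank ℝ M = n},
      ‖(T.symm : Y →L[ℝ] X).comp M.1.subtypeL‖⁻¹ := by
  let e : {L : Submodule ℝ X // finrank ℝ L = n} ≃ {M : Submodule ℝ Y // finrank ℝ M = n} :=
    (Submodule.orderIsoMapComap T.toLinearEquiv).toEquiv.subtypeEquiv fun L ↦ by
      rw [← LinearEquiv.finrank_map_eq T.toLinearEquiv L]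
      rfl
  rw [bernsteinNumber, ← e.iSup_comp]
  refine iSup_congr fun L ↦ ?_
  refine ((T.submoduleMap L.1).iInf_norm_div_norm_eq_inv_norm_symm).trans (congrArg _ ?_)
  exact (L.1.subtypeₗᵢ.norm_toContinuousLinearMap_comp (g :=
    (T.submoduleMap L.1).symm.toContinuousLinearMap)).symm

theorem gelfandNumber_finrank_sub_add_one_eq_iInf [FiniteDimensional ℝ X] (S : X →L[ℝ] Y)
    {k : ℕ} (hk : k ≤ finrank ℝ X) :
    gelfandNumber (finrank ℝ X - k + 1) S =
      ⨅ M : {M : Submodule ℝ X // finrank ℝ M = k}, ‖S.comp M.1.subtypeL‖ := by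
  have hcodim (M : Submodule ℝ X) :
      finrank ℝ (X ⧸ M) < finrank ℝ X - k + 1 ↔ k ≤ finrank ℝ M := by
    have := M.finrank_quotient_add_finrank
    omega
  have hne := Submodule.nonempty_finrank_eq (K := ℝ) hk
  have hmem (M : Submodule ℝ X) (hM : k ≤ finrank ℝ M) : ‖S.comp M.subtypeL‖ ∈
      {c : ℝ | ∃ M : Submodule ℝ X, IsClosed (M : Set X) ∧ FiniteDimensional ℝ (X ⧸ M) ∧
        finrank ℝ (X ⧸ M) < finrank ℝ X - k + 1 ∧ ‖S.comp M.subtypeL‖ = c} :=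
    ⟨M, M.closed_of_finiteDimensional, inferInstance, (hcodim M).2 hM, rfl⟩
  refine le_antisymm (le_ciInf fun M ↦ csInf_le ⟨0, ?_⟩ (hmem M M.2.ge))
    (le_csInf ⟨_, hmem _ (Classical.choice hne).2.ge⟩ ?_)
  · rintro _ ⟨M, -, -, -, rfl⟩
    positivity
  rintro _ ⟨M, -, -, hM, rfl⟩
  obtain ⟨N, hNM, hN⟩ := M.exists_le_finrank_eq ((hcodim M).1 hM)
  exact (ciInf_le ⟨0, by rintro _ ⟨N, rfl⟩; positivity⟩ ⟨N, hN⟩).trans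
    (S.norm_comp_subtypeL_mono hNM)

end

theorem bernstein_mul_gelfand_inv_general
    {X Y : Type*} [NormedAddCommGroup X] [NormedSpace ℝ X]
    [NormedAddCommGroup Y] [NormedSpace ℝ Y]
    [FiniteDimensional ℝ Y]
    (m : ℕ) (hX : Module.finrank ℝ X = m) (hY : Module.finrank ℝ Y = m)
    (T : X ≃L[ℝ] Y) (n : ℕ) (hn : 1 ≤ n) (hnm : n ≤ m) :
    bernsteinNumber n (T : X →L[ℝ] Y) * gelfandNumber (m - n + 1) (T.symm : Y →L[ℝ] X) = 1 := by
  subst hY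
  have : Nontrivial X := Module.nontrivial_of_finrank_pos (by omega : 0 < finrank ℝ X)
  have := Submodule.nonempty_finrank_eq (K := ℝ) hnm
  have hlow (M : {M : Submodule ℝ Y // finrank ℝ M = n}) :
      ‖(T : X →L[ℝ] Y)‖⁻¹ ≤ ‖(T.symm : Y →L[ℝ] X).comp M.1.subtypeL‖ :=
    have : Nontrivial M.1 := Module.nontrivial_of_finrank_pos (by rw [M.2]; omega)
    T.inv_norm_le_norm_symm_comp_subtypeL M.1
  have hT : 0 < ‖(T : X →L[ℝ] Y)‖⁻¹ := inv_pos.2 T.norm_pos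
  rw [bernsteinNumber_eq_iSup_inv_norm_symm_comp_subtypeL,
    gelfandNumber_finrank_sub_add_one_eq_iInf _ hnm, Real.iSup_inv_eq_inv_iInf hT hlow]
  exact inv_mul_cancel₀ (hT.trans_le (le_ciInf hlow)).ne'

/-- If `dim X = dim Y = m < ∞` and `T : X → Y` is invertible, then for
`1 ≤ n ≤ m` one has `b_n(T) · c_{m-n+1}(T⁻¹) = 1`. -/
theorem bernstein_mul_gelfand_inv
    {X Y : Type*} [NormedAddCommGroup X] [NormedSpace ℝ X] [CompleteSpace X]
    [NormedAddCommGroup Y] [NormedSpace ℝ Y] [CompleteSpace Y]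
    [FiniteDimensional ℝ X] [FiniteDimensional ℝ Y]
    (m : ℕ) (hX : Module.finrank ℝ X = m) (hY : Module.finrank ℝ Y = m)
    (T : X ≃L[ℝ] Y) (n : ℕ) (hn : 1 ≤ n) (hnm : n ≤ m) :
    bernsteinNumber n (T : X →L[ℝ] Y) * gelfandNumber (m - n + 1) (T.symm : Y →L[ℝ] X) = 1 :=
  bernstein_mul_gelfand_inv_general m hX hY T n hn hnm
end
end

section
/- The absolutely 2-summing norm of the identity map from ℓ_p^m to ℓ_2^m with 2 ≤ p ≤ ∞ satisfies π_2(id : ℓ_p^m → ℓ_2^m) = m^{1/2}. -/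
/-!
Upper bound: the coordinate functionals lie in the dual unit ball of `ℓ_p^m`, so
`∑ⱼ ‖xⱼ‖₂² = ∑ᵢ ∑ⱼ xⱼ(i)² ≤ m · sup_f ∑ⱼ f(xⱼ)²`.
Lower bound: test on the unit vectors `e₁, …, eₘ`, whose strong `ℓ₂`-sum is `√m`. If `‖f‖ ≤ 1`
and `c = (f eⱼ)ⱼ`, then `‖c‖₂² = f c ≤ ‖c‖_p ≤ ‖c‖₂` because `p ≥ 2`; hence their weak `ℓ₂`-sum
is at most `1`.
-/

noncomputable section

open scoped ENNReal

/-- The identity map `ℓ_p^m → ℓ_q^m` as a continuous linear map. -/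
def idLp (m : ℕ) (p q : ℝ≥0∞) [Fact (1 ≤ p)] [Fact (1 ≤ q)] :
    PiLp p (fun _ : Fin m => ℝ) →L[ℝ] PiLp q (fun _ : Fin m => ℝ) :=
  LinearMap.toContinuousLinearMap
    ((WithLp.linearEquiv q ℝ (Fin m → ℝ)).symm.toLinearMap ∘ₗ
      (WithLp.linearEquiv p ℝ (Fin m → ℝ)).toLinearMap)

/-- `T` is absolutely `(r,s)`-summing with constant `C`. -/
def IsAbsSumming {X Y : Type*} [NormedAddCommGroup X] [NormedSpace ℝ X]
    [NormedAddCommGroup Y] [NormedSpace ℝ Y]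
    (r s : ℝ) (T : X →L[ℝ] Y) (C : ℝ) : Prop :=
  ∀ (k : ℕ) (x : Fin k → X),
    (∑ j, ‖T (x j)‖ ^ r) ^ (1 / r) ≤
      C * ⨆ f : {f : X →L[ℝ] ℝ // ‖f‖ ≤ 1}, (∑ j, |f.1 (x j)| ^ s) ^ (1 / s)

/-- The absolutely `(r,s)`-summing norm `π_{r,s}(T)`. -/
def summingNorm {X Y : Type*} [NormedAddCommGroup X] [NormedSpace ℝ X]
    [NormedAddCommGroup Y] [NormedSpace ℝ Y] (r s : ℝ) (T : X →L[ℝ] Y) : ℝ :=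
  sInf {C : ℝ | 0 ≤ C ∧ IsAbsSumming r s T C}

namespace PiLp

variable {ι : Type*} [Fintype ι] {β : ι → Type*} [∀ i, SeminormedAddCommGroup (β i)]

theorem norm_toLp_le_norm_toLp {p q : ℝ≥0∞} [Fact (1 ≤ p)] [Fact (1 ≤ q)] (hpq : p ≤ q)
    (x : ∀ i, β i) : ‖WithLp.toLp q x‖ ≤ ‖WithLp.toLp p x‖ := by
  set S := ‖WithLp.toLp p x‖ with hS
  have hxS : ∀ i, ‖x i‖ ≤ S := fun i => norm_apply_le (WithLp.toLp p x) i
  rcases eq_or_ne q ∞ with rfl | hq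
  · rw [norm_eq_ciSup]
    exact Real.iSup_le hxS (norm_nonneg _)
  have hp : p ≠ ∞ := ne_top_of_le_ne_top hq hpq
  have hp0 : 0 < p.toReal := ENNReal.toReal_pos (zero_lt_one.trans_le Fact.out).ne' hp
  have hq0 : 0 < q.toReal := ENNReal.toReal_pos (zero_lt_one.trans_le Fact.out).ne' hq
  have hpq' : p.toReal ≤ q.toReal := ENNReal.toReal_mono hq hpq
  have hSp : S ^ p.toReal = ∑ i, ‖x i‖ ^ p.toReal := by
    rw [hS, norm_eq_sum hp0, one_div, Real.rpow_inv_rpow (by positivity) hp0.ne']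
  have hsum : ∑ i, ‖x i‖ ^ q.toReal ≤ S ^ q.toReal :=
    calc ∑ i, ‖x i‖ ^ q.toReal
        = ∑ i, ‖x i‖ ^ p.toReal * ‖x i‖ ^ (q.toReal - p.toReal) := by
          refine Finset.sum_congr rfl fun i _ => ?_
          rw [← Real.rpow_add' (norm_nonneg _) (by linarith), add_sub_cancel]
      _ ≤ ∑ i, ‖x i‖ ^ p.toReal * S ^ (q.toReal - p.toReal) := by
          gcongr with i
          exact hxS i
      _ = S ^ q.toReal := by
          rw [← Finset.sum_mul, ← hSp, ← Real.rpow_add' (norm_nonneg _) (by linarith),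
            add_sub_cancel]
  calc ‖WithLp.toLp q x‖ = (∑ i, ‖x i‖ ^ q.toReal) ^ (1 / q.toReal) := norm_eq_sum hq0 _
    _ ≤ (S ^ q.toReal) ^ (1 / q.toReal) := by gcongr
    _ = S := by rw [one_div, Real.rpow_rpow_inv (norm_nonneg _) hq0.ne']

theorem norm_proj_le_one {𝕜 : Type*} [NontriviallyNormedField 𝕜] {γ : ι → Type*}
    [∀ i, NormedAddCommGroup (γ i)] [∀ i, NormedSpace 𝕜 (γ i)] (p : ℝ≥0∞) [Fact (1 ≤ p)]
    (i : ι) : ‖(proj p (𝕜 := 𝕜) γ i : PiLp p γ →L[𝕜] γ i)‖ ≤ 1 :=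
  ContinuousLinearMap.opNorm_le_bound _ zero_le_one fun x => by
    simpa using PiLp.norm_apply_le x i

end PiLp

section Summing

variable {X : Type*} [NormedAddCommGroup X] [NormedSpace ℝ X]

theorem isAbsSumming_two_two_iff {Y : Type*} [NormedAddCommGroup Y] [NormedSpace ℝ Y]
    (T : X →L[ℝ] Y) (C : ℝ) :
    IsAbsSumming 2 2 T C ↔ ∀ (k : ℕ) (x : Fin k → X),
      √(∑ j, ‖T (x j)‖ ^ 2) ≤ C * ⨆ f : {f : X →L[ℝ] ℝ // ‖f‖ ≤ 1}, √(∑ j, f.1 (x j) ^ 2) := by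
  simp only [IsAbsSumming, Real.rpow_two, sq_abs, Real.sqrt_eq_rpow]

theorem sqrt_sum_sq_le_iSup_dual_ball {k : ℕ} (x : Fin k → X) (g : X →L[ℝ] ℝ) (hg : ‖g‖ ≤ 1) :
    √(∑ j, g (x j) ^ 2) ≤ ⨆ f : {f : X →L[ℝ] ℝ // ‖f‖ ≤ 1}, √(∑ j, f.1 (x j) ^ 2) := by
  have hle : ∀ f : X →L[ℝ] ℝ, ‖f‖ ≤ 1 → √(∑ j, f (x j) ^ 2) ≤ √(∑ j, ‖x j‖ ^ 2) := by
    intro f hf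
    refine Real.sqrt_le_sqrt (Finset.sum_le_sum fun j _ => ?_)
    rw [← sq_abs, ← Real.norm_eq_abs]
    gcongr
    exact f.le_of_opNorm_le hf (x j) |>.trans_eq (one_mul _)
  exact le_ciSup (f := fun f : {f : X →L[ℝ] ℝ // ‖f‖ ≤ 1} => √(∑ j, f.1 (x j) ^ 2))
    ⟨√(∑ j, ‖x j‖ ^ 2), Set.forall_mem_range.2 fun f => hle f.1 f.2⟩ ⟨g, hg⟩

theorem isAbsSumming_two_two_of_norm_proj_comp_le_one {ι : Type*} [Fintype ι]
    (T : X →L[ℝ] PiLp 2 (fun _ : ι => ℝ))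
    (hT : ∀ i, ‖(PiLp.proj 2 (fun _ : ι => ℝ) i).comp T‖ ≤ 1) :
    IsAbsSumming 2 2 T √(Fintype.card ι) := by
  rw [isAbsSumming_two_two_iff]
  intro k x
  set W := ⨆ f : {f : X →L[ℝ] ℝ // ‖f‖ ≤ 1}, √(∑ j, f.1 (x j) ^ 2)
  have hW : 0 ≤ W := (Real.sqrt_nonneg _).trans (sqrt_sum_sq_le_iSup_dual_ball x 0 (by simp))
  have hcoord : ∀ i, ∑ j, T (x j) i ^ 2 ≤ W ^ 2 := fun i =>
    (Real.sqrt_le_left hW).mp (sqrt_sum_sq_le_iSup_dual_ball x _ (hT i))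
  calc √(∑ j, ‖T (x j)‖ ^ 2)
      = √(∑ i, ∑ j, T (x j) i ^ 2) := by
        simp only [PiLp.norm_sq_eq_of_L2, Real.norm_eq_abs, sq_abs]
        rw [Finset.sum_comm]
    _ ≤ √(Fintype.card ι * W ^ 2) := by
        gcongr
        simpa using Finset.sum_le_sum fun i (_ : i ∈ Finset.univ) => hcoord i
    _ = √(Fintype.card ι) * W := by rw [Real.sqrt_mul (Nat.cast_nonneg _), Real.sqrt_sq hW]

end Summing

theorem sqrt_sum_sq_apply_single_le_opNorm {ι : Type*} [Fintype ι] [DecidableEq ι]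
    {p : ℝ≥0∞} [Fact (1 ≤ p)] (hp : 2 ≤ p) (f : PiLp p (fun _ : ι => ℝ) →L[ℝ] ℝ) :
    √(∑ i, f (PiLp.single p i 1) ^ 2) ≤ ‖f‖ := by
  set c : ι → ℝ := fun i => f (PiLp.single p i 1)
  set t := ∑ i, c i ^ 2
  have hft : f (WithLp.toLp p c) = t := by
    conv_lhs => rw [← (PiLp.basisFun p ℝ ι).sum_repr (WithLp.toLp p c)]
    simp [c, t, sq]
  have hc2 : ‖WithLp.toLp 2 c‖ = √t := by simp [PiLp.norm_eq_of_L2, t]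
  have key : √t * √t ≤ ‖f‖ * √t :=
    calc √t * √t = t := Real.mul_self_sqrt (by positivity)
      _ ≤ ‖f‖ * ‖WithLp.toLp p c‖ := hft ▸ (le_abs_self _).trans (f.le_opNorm _)
      _ ≤ ‖f‖ * √t := by
          gcongr
          exact hc2 ▸ PiLp.norm_toLp_le_norm_toLp hp c
  rcases (Real.sqrt_nonneg t).eq_or_lt with ht | ht
  · exact ht ▸ norm_nonneg f
  · exact le_of_mul_le_mul_right key ht

theorem sqrt_le_of_isAbsSumming_idLp (m : ℕ) {p : ℝ≥0∞} [Fact (1 ≤ p)] (hp : 2 ≤ p) {C : ℝ}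
    (hC0 : 0 ≤ C) (hC : IsAbsSumming 2 2 (idLp m p 2) C) : √m ≤ C := by
  have h := (isAbsSumming_two_two_iff _ C).mp hC m fun j => PiLp.single p j 1
  have hnorm : ∀ j, ‖idLp m p 2 (PiLp.single p j 1)‖ = 1 := fun j =>
    (PiLp.norm_single 2 (fun _ => ℝ) j 1).trans norm_one
  have : Nonempty {f : PiLp p (fun _ : Fin m => ℝ) →L[ℝ] ℝ // ‖f‖ ≤ 1} := ⟨⟨0, by simp⟩⟩
  have hW : ⨆ f : {f : PiLp p (fun _ : Fin m => ℝ) →L[ℝ] ℝ // ‖f‖ ≤ 1},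
      √(∑ j, f.1 (PiLp.single p j 1) ^ 2) ≤ 1 :=
    ciSup_le fun f => (sqrt_sum_sq_apply_single_le_opNorm hp f.1).trans f.2
  simp only [hnorm, one_pow, Finset.sum_const, Finset.card_univ, Fintype.card_fin,
    nsmul_eq_mul, mul_one] at h
  calc √m ≤ C * _ := h
    _ ≤ C * 1 := by gcongr
    _ = C := mul_one C

/-- For `2 ≤ p ≤ ∞`, the absolutely 2-summing norm of the identity
`id : ℓ_p^m → ℓ_2^m` equals `m^{1/2}`. -/
theorem summingNorm_id_lp (m : ℕ) (p : ℝ≥0∞) [Fact (1 ≤ p)] (hp : 2 ≤ p) :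
    summingNorm 2 2 (idLp m p 2) = Real.sqrt m := by
  have hupper : IsAbsSumming 2 2 (idLp m p 2) √m := by
    simpa using isAbsSumming_two_two_of_norm_proj_comp_le_one (idLp m p 2)
      fun i => PiLp.norm_proj_le_one p i
  exact IsLeast.csInf_eq ⟨⟨Real.sqrt_nonneg _, hupper⟩,
    fun C hC => sqrt_le_of_isAbsSumming_idLp m hp hC.1 hC.2⟩
end
end
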